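/- arXiv:2306.07806 — 2 statements merged into one kernel-verified Lean document; each statement's English description precedes it below -/
import Mathlib

section
/- Let M be a type and consider moves in M × Bool (two tagged copies of M). Define the copy-cat set cp to be the set of all even-length lists s over M × Bool such that every even-length prefix t of s satisfies: the subsequence of t consisting of entries tagged true, with tags erased, equals the subsequence of entries tagged false, with tags erased. Then cp is deterministic: if s ++ [(m, b), (n, c)] ∈ cp and s ++ [(m, b), (n', c')] ∈ cp, then (n, c) = (n', c'). -/
/-- The restriction of a tagged play to one of the two copies:
the entries carrying tag `b`, with tags erased. -/
def restrictTag {M : Type} (t : List (M × Bool)) (b : Bool) : List M :=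
  (t.filter (fun p => p.2 == b)).map Prod.fst

/-- The copy-cat set: even-length lists over `M × Bool` all of whose even-length
prefixes restrict equally to the two copies. -/
def copycat {M : Type} : Set (List (M × Bool)) :=
  {s | Even s.length ∧
    ∀ t, t <+: s → Even t.length → restrictTag t true = restrictTag t false}

lemma restrictTag_append {M : Type} (t u : List (M × Bool)) (b : Bool) :
    restrictTag (t ++ u) b = restrictTag t b ++ restrictTag u b := by
  simp [restrictTag, List.filter_append]

lemma copycat_copies {M : Type} (s : List (M × Bool)) (m n : M) (b c : Bool)
    (h : s ++ [(m, b), (n, c)] ∈ copycat) : n = m ∧ c = !b := by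
  obtain ⟨hev, hpref⟩ := h
  have hsev : Even s.length := by
    simpa [Nat.even_add] using hev
  have hs : restrictTag s true = restrictTag s false :=
    hpref s ⟨[(m, b), (n, c)], rfl⟩ hsev
  have hfull := hpref _ (List.prefix_refl _) hev
  rw [restrictTag_append, restrictTag_append, hs] at hfull
  have h2 : restrictTag [(m, b), (n, c)] true = restrictTag [(m, b), (n, c)] false :=
    List.append_cancel_left hfull
  rcases b <;> rcases c <;> simp_all [restrictTag]

/-- The copy-cat set is deterministic. -/
theorem copycat_deterministic {M : Type} (s : List (M × Bool))
    (m n n' : M) (b c c' : Bool)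
    (h1 : s ++ [(m, b), (n, c)] ∈ copycat)
    (h2 : s ++ [(m, b), (n', c')] ∈ copycat) :
    (n, c) = (n', c') := by
  obtain ⟨hn, hc⟩ := copycat_copies s m n b c h1
  obtain ⟨hn', hc'⟩ := copycat_copies s m n' b c' h2
  simp [hn, hc, hn', hc']
end

section
/- In the copy-cat set over M × Bool (all even-length lists s over M × Bool such that every even-length prefix t satisfies t↾true = t↾false), every element of even length 2k, for any even-length prefix decomposition s ++ [(m,b),(n,c)], necessarily satisfies n = m and c = ¬b. That is, in a copy-cat play, each Player response repeats the preceding Opponent move in the opposite copy. -/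
/-- In a copy-cat play, each Player response repeats the preceding Opponent move
in the opposite copy. -/
theorem copycat_response {M : Type} (s : List (M × Bool)) (m n : M) (b c : Bool)
    (hs : Even s.length) (h : s ++ [(m, b), (n, c)] ∈ copycat) :
    n = m ∧ c = !b := by
  obtain ⟨-, hpre⟩ := h
  have h1 : restrictTag s true = restrictTag s false :=
    hpre s ⟨[(m, b), (n, c)], rfl⟩ hs
  have h2 := hpre (s ++ [(m, b), (n, c)]) List.prefix_rfl
    (by simpa [List.length_append, Nat.even_add] using hs)
  simp only [restrictTag, List.filter_append, List.map_append, h1] at h2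
  simp only [restrictTag, List.filter_append, List.map_append] at h1
  rw [h1, List.append_cancel_left_eq] at h2
  cases b <;> cases c <;> simp_all [restrictTag]
end
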